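/- Let f be a meromorphic function on ℂ with the property that for every ε > 0 and every R > 0 there is u with |u| > R and |f(u) - b| < ε, where b ∈ ℂ is fixed. Suppose b is attained by f with total multiplicity m at points u₁, …, u_m in some disc. Then in every neighborhood of b there is a value c attained by f at least m + 1 times (counted at distinct points of ℂ). -/

import Mathlib

/-!
If `f` is constant near some `uᵢ`, then `b` itself has infinitely many preimages. Otherwise, by
the open mapping theorem, every value `c` close enough to `b` is attained in each of `m` disjoint
small discs around the `uᵢ`; taking `c = f w` for a point `w` far outside these discs with `f w`
close to `b` gives the `(m + 1)`-st preimage.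
-/

open Filter Metric Set Topology Function

lemma exists_injective_fin_of_eventually_eq {X Y : Type*} [TopologicalSpace X] [T1Space X]
    {f : X → Y} {a : X} [(𝓝[≠] a).NeBot] {b : Y} (h : ∀ᶠ x in 𝓝 a, f x = b) (n : ℕ) :
    ∃ pts : Fin n → X, Injective pts ∧ ∀ i, f (pts i) = b := by
  let e := (infinite_of_mem_nhds a h).natEmbedding
  exact ⟨fun i => e i, Subtype.val_injective.comp (e.injective.comp Fin.val_injective),
    fun i => (e i).2⟩

lemma exists_pos_pairwise_disjoint_ball {X ι : Type*} [MetricSpace X] [Finite ι] {u : ι → X}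
    (hu : Injective u) : ∃ r > (0 : ℝ), Pairwise (Disjoint on fun i => ball (u i) r) := by
  have : ∀ᶠ r in 𝓝[>] (0 : ℝ), ∀ i j, i ≠ j → Disjoint (ball (u i) r) (ball (u j) r) := by
    simp only [eventually_all]
    intro i j hij
    have hpos : 0 < dist (u i) (u j) / 2 := half_pos (dist_pos.2 (hu.ne hij))
    filter_upwards [Ioo_mem_nhdsGT hpos] with r hr
    exact ball_disjoint_ball (by linarith [hr.2])
  obtain ⟨r, hdisj, hr⟩ := (this.and self_mem_nhdsWithin).exists
  exact ⟨r, hr, hdisj⟩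

lemma injective_cons_of_mem_pairwise_disjoint {α : Type*} {n : ℕ} {s : Fin n → Set α}
    (hs : Pairwise (Disjoint on s)) {v : Fin n → α} (hv : ∀ i, v i ∈ s i) {w : α}
    (hw : ∀ i, w ∉ s i) : Injective (Fin.cons w v : Fin (n + 1) → α) := by
  refine Fin.cons_injective_iff.2 ⟨fun ⟨i, hi⟩ => hw i (hi ▸ hv i), fun i j hij => ?_⟩
  by_contra hne
  exact (hs hne).ne_of_mem (hv i) (hv j) hij

lemma mapClusterPt_cobounded_iff {E Y : Type*} [SeminormedAddCommGroup E] [TopologicalSpace Y]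
    {f : E → Y} {b : Y} :
    MapClusterPt b (Bornology.cobounded E) f ↔ ∀ s ∈ 𝓝 b, ∀ R : ℝ, ∃ x, R ≤ ‖x‖ ∧ f x ∈ s := by
  simp only [mapClusterPt_iff_frequently, hasBasis_cobounded_norm.frequently_iff, forall_const,
    mem_ofPred_eq]

lemma exists_injective_fin_succ_of_nhds_le_map {X Y : Type*} [MetricSpace X] [TopologicalSpace Y]
    {f : X → Y} {b : Y} (hb : MapClusterPt b (Bornology.cobounded X) f) {m : ℕ} {u : Fin m → X}
    (hu : Injective u) (hmap : ∀ i, 𝓝 b ≤ map f (𝓝 (u i))) {s : Set Y} (hs : s ∈ 𝓝 b) :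
    ∃ c ∈ s, ∃ pts : Fin (m + 1) → X, Injective pts ∧ ∀ i, f (pts i) = c := by
  obtain ⟨r, hr, hdisj⟩ := exists_pos_pairwise_disjoint_ball hu
  have himage : ∀ i, f '' ball (u i) r ∈ 𝓝 b := fun i =>
    hmap i (image_mem_map (ball_mem_nhds _ hr))
  have hfar : (⋃ i, ball (u i) r)ᶜ ∈ Bornology.cobounded X :=
    Bornology.isBounded_def.1 (Bornology.isBounded_iUnion.2 fun _ => isBounded_ball)
  obtain ⟨w, ⟨hws, hwv⟩, hw⟩ :=
    ((mapClusterPt_iff_frequently.1 hb _ (inter_mem hs (iInter_mem.2 himage))).and_eventually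
      hfar).exists
  choose v hv hvw using mem_iInter.1 hwv
  refine ⟨f w, hws, Fin.cons w v, injective_cons_of_mem_pairwise_disjoint hdisj hv
    fun i hi => hw (mem_iUnion_of_mem i hi), Fin.cases rfl hvw⟩

theorem stmt_15_general (f : ℂ → ℂ) (b : ℂ)
    (hclose : ∀ ε > (0 : ℝ), ∀ R > (0 : ℝ), ∃ u : ℂ,
      R < ‖u‖ ∧ ‖f u - b‖ < ε)
    (m : ℕ) (u : Fin m → ℂ) (hui : Function.Injective u)
    (huan : ∀ i, AnalyticAt ℂ f (u i)) (hub : ∀ i, f (u i) = b) :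
    ∀ ε > (0 : ℝ), ∃ c : ℂ, ‖c - b‖ < ε ∧
      ∃ pts : Fin (m + 1) → ℂ, Function.Injective pts ∧ ∀ i, f (pts i) = c := by
  intro ε hε
  by_cases hconst : ∃ i, ∀ᶠ z in 𝓝 (u i), f z = f (u i)
  · obtain ⟨i, hi⟩ := hconst
    rw [hub i] at hi
    exact ⟨b, by simpa using hε, exists_injective_fin_of_eventually_eq hi (m + 1)⟩
  have hmap (i : Fin m) : 𝓝 b ≤ map f (𝓝 (u i)) :=
    hub i ▸ (huan i).eventually_constant_or_nhds_le_map_nhds.resolve_left (not_exists.1 hconst i)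
  have hcluster : MapClusterPt b (Bornology.cobounded ℂ) f := by
    refine mapClusterPt_cobounded_iff.2 fun s hs R => ?_
    obtain ⟨δ, hδ, hδs⟩ := Metric.mem_nhds_iff.1 hs
    obtain ⟨z, hRz, hz⟩ := hclose δ hδ (max R 1) (by positivity)
    exact ⟨z, (le_max_left _ _).trans hRz.le, hδs (by rwa [mem_ball, dist_eq_norm])⟩
  obtain ⟨c, hc, hpts⟩ :=
    exists_injective_fin_succ_of_nhds_le_map hcluster hui hmap (ball_mem_nhds b hε)
  exact ⟨c, by rwa [mem_ball, dist_eq_norm] at hc, hpts⟩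

/-- If a nonconstant meromorphic `f` comes arbitrarily close to the value `b` outside
every disc, and `b` is attained at the `m` distinct points `u₁, …, u_m`, then every
neighborhood of `b` contains a value attained by `f` at at least `m + 1` distinct points. -/
theorem stmt_15 (f : ℂ → ℂ) (hf : MeromorphicOn f Set.univ)
    (hnc : ¬ ∃ c, ∀ u, f u = c) (b : ℂ)
    (hclose : ∀ ε > (0 : ℝ), ∀ R > (0 : ℝ), ∃ u : ℂ,
      R < ‖u‖ ∧ ‖f u - b‖ < ε)
    (m : ℕ) (u : Fin m → ℂ) (hui : Function.Injective u)
    (huan : ∀ i, AnalyticAt ℂ f (u i)) (hub : ∀ i, f (u i) = b) :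
    ∀ ε > (0 : ℝ), ∃ c : ℂ, ‖c - b‖ < ε ∧
      ∃ pts : Fin (m + 1) → ℂ, Function.Injective pts ∧ ∀ i, f (pts i) = c :=
  stmt_15_general f b hclose m u hui huan hub
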